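/- Entropy inequality for a = d (sufficiency part of the Entropy Inequalities theorem): Let (ρ, m, E) be a smooth solution of the regularized Euler system with fluxes 𝕘 = 𝔾 + f⊗u, 𝔾 : ∇u ≥ 0, h = l − ½|u|² f, f = a(ρ,e)∇ρ with a ≥ 0, and l = s_e^{−1}(e s_e − ρ s_ρ) f + d(ρ,e) ρ s_e^{−1} ∇s with d ≥ 0. If a(ρ,e) = d(ρ,e) for all (ρ,e), then for every generalized entropy ρ f(s) — i.e., every f ∈ C²(ℝ;ℝ) with f'(s) > 0 and f'(s) c_p(ρ,e)^{−1} − f''(s) > 0 at all states — the solution satisfies the pointwise entropy inequality ∂_t(ρ f(s)) + div( u ρ f(s) − d ρ ∇f(s) − a f(s) ∇ρ ) ≥ 0. -/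

import Mathlib

/-!
Along a smooth solution the conservative equations can be put in transport form. Mass,
momentum and total energy together give the internal energy balance
`ρ De/Dt + e div f + p div u = div l + 𝔾 : ∇u`, and the Gibbs relation turns it into
`ρ T Ds/Dt = div l - 𝔥 div f + 𝔾 : ∇u`, where `𝔥 = T (e s_e - ρ s_ρ) = e + p/ρ` is the specific
enthalpy. Since `l = 𝔥 f + d ρ T ∇s`, the flux `d ρ ∇F(s)` equals `F'(s) s_e (l - 𝔥 f)`, so the
entropy production of `ρ F(s)` involves first derivatives only: it is `F'(s) s_e 𝔾 : ∇u` plus,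
when `f = d ∇ρ`, the sum over `i` of `-(d/ρ) Q(∂ᵢρ, ρ ∂ᵢe)`, where `Q` is the quadratic form of
`F'(s) Σ + F''(s) w wᵀ` with `Σ = [[∂_ρ(ρ² s_ρ), ρ s_ρe], [ρ s_ρe, s_ee]]` and `w = (ρ s_ρ, s_e)`.
The convexity conditions say that `Σ` is negative definite, and `c_p = wᵀ (-Σ)⁻¹ w`, so
`F'/c_p - F'' > 0` is exactly `det (F' Σ + F'' w wᵀ) > 0`; hence `Q ≤ 0`.
-/

noncomputable section

open Real

/-- Partial derivative with respect to the first variable (`ρ`). -/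
def D1 (f : ℝ × ℝ → ℝ) (x : ℝ × ℝ) : ℝ := fderiv ℝ f x (1, 0)

/-- Partial derivative with respect to the second variable (`e`). -/
def D2 (f : ℝ × ℝ → ℝ) (x : ℝ × ℝ) : ℝ := fderiv ℝ f x (0, 1)

/-- The state domain `(0,∞)²`. -/
def dom : Set (ℝ × ℝ) := {x : ℝ × ℝ | 0 < x.1 ∧ 0 < x.2}

/-- `s_ρ` -/
def sRho (s : ℝ × ℝ → ℝ) : ℝ × ℝ → ℝ := D1 s

/-- `s_e` -/
def sE (s : ℝ × ℝ → ℝ) : ℝ × ℝ → ℝ := D2 s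

/-- `s_{ρe}` -/
def sRhoE (s : ℝ × ℝ → ℝ) : ℝ × ℝ → ℝ := D1 (D2 s)

/-- `s_{ee}` -/
def sEE (s : ℝ × ℝ → ℝ) : ℝ × ℝ → ℝ := D2 (D2 s)

/-- The pressure `p := -ρ² s_ρ / s_e`. -/
def press (s : ℝ × ℝ → ℝ) (x : ℝ × ℝ) : ℝ := -x.1 ^ 2 * sRho s x / sE s x

/-- The temperature `T := 1 / s_e`. -/
def temp (s : ℝ × ℝ → ℝ) (x : ℝ × ℝ) : ℝ := (sE s x)⁻¹

/-- `∂_ρ(ρ² s_ρ)` -/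
def dRho2sRho (s : ℝ × ℝ → ℝ) (x : ℝ × ℝ) : ℝ :=
  deriv (fun r : ℝ => r ^ 2 * sRho s (r, x.2)) x.1

/-- `det Σ := ∂_ρ(ρ² s_ρ)·s_{ee} - ρ² s_{ρe}²`. -/
def detSigma (s : ℝ × ℝ → ℝ) (x : ℝ × ℝ) : ℝ :=
  dRho2sRho s x * sEE s x - x.1 ^ 2 * (sRhoE s x) ^ 2

/-- `p_ρ` -/
def pRho (s : ℝ × ℝ → ℝ) : ℝ × ℝ → ℝ := D1 (press s)

/-- `p_e` -/
def pE (s : ℝ × ℝ → ℝ) : ℝ × ℝ → ℝ := D2 (press s)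

/-- `T_ρ` -/
def tRho (s : ℝ × ℝ → ℝ) : ℝ × ℝ → ℝ := D1 (temp s)

/-- `T_e` -/
def tE (s : ℝ × ℝ → ℝ) : ℝ × ℝ → ℝ := D2 (temp s)

/-- The specific heat at constant pressure
`c_p := s_e⁻¹ (p_ρ s_e - p_e s_ρ) / (p_ρ T_e - p_e T_ρ)`. -/
def cP (s : ℝ × ℝ → ℝ) (x : ℝ × ℝ) : ℝ :=
  (sE s x)⁻¹ * (pRho s x * sE s x - pE s x * sRho s x) /
    (pRho s x * tE s x - pE s x * tRho s x)

/-- The squared sound speed `c² := p_ρ - (s_ρ/s_e) p_e`. -/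
def cSq (s : ℝ × ℝ → ℝ) (x : ℝ × ℝ) : ℝ := pRho s x - sRho s x / sE s x * pE s x

/-- The convexity conditions `∂_ρ(ρ² s_ρ) < 0`, `s_{ee} < 0`, `det Σ > 0` on the domain. -/
def Convexity (s : ℝ × ℝ → ℝ) : Prop :=
  ∀ x ∈ dom, dRho2sRho s x < 0 ∧ sEE s x < 0 ∧ 0 < detSigma s x

/-- Time derivative `∂_t f` of a scalar field on space-time `ℝ × ℝ^n` (time first). -/
def Dt {n : ℕ} (f : ℝ × (Fin n → ℝ) → ℝ) (q : ℝ × (Fin n → ℝ)) : ℝ :=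
  fderiv ℝ f q (1, 0)

/-- Spatial partial derivative `∂_{x_i} f` of a scalar field on space-time `ℝ × ℝ^n`. -/
def Dx {n : ℕ} (i : Fin n) (f : ℝ × (Fin n → ℝ) → ℝ) (q : ℝ × (Fin n → ℝ)) : ℝ :=
  fderiv ℝ f q (0, Pi.single i 1)

section PointwiseCalculus

variable {E : Type*} [NormedAddCommGroup E] [NormedSpace ℝ E] {f g : E → ℝ} {x : E}

theorem fderiv_fun_mul_apply (hf : DifferentiableAt ℝ f x) (hg : DifferentiableAt ℝ g x) (v : E) :
    fderiv ℝ (fun y => f y * g y) x v = f x * fderiv ℝ g x v + g x * fderiv ℝ f x v := by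
  rw [fderiv_fun_mul hf hg]; rfl

theorem fderiv_fun_add_apply (hf : DifferentiableAt ℝ f x) (hg : DifferentiableAt ℝ g x) (v : E) :
    fderiv ℝ (fun y => f y + g y) x v = fderiv ℝ f x v + fderiv ℝ g x v := by
  rw [fderiv_fun_add hf hg]; rfl

theorem fderiv_comp_apply_eq_deriv_mul {F : ℝ → ℝ} (hF : DifferentiableAt ℝ F (f x))
    (hf : DifferentiableAt ℝ f x) (v : E) :
    fderiv ℝ (fun y => F (f y)) x v = deriv F (f x) * fderiv ℝ f x v := by
  rw [show (fun y => F (f y)) = F ∘ f from rfl, fderiv_comp x hF hf,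
    ContinuousLinearMap.comp_apply, fderiv_eq_smul_deriv, smul_eq_mul, mul_comm]

theorem fderiv_fun_inv_apply (hf : DifferentiableAt ℝ f x) (hf0 : f x ≠ 0) (v : E) :
    fderiv ℝ (fun y => (f y)⁻¹) x v = -fderiv ℝ f x v / f x ^ 2 := by
  rw [fderiv_comp_apply_eq_deriv_mul (differentiableAt_inv hf0) hf, deriv_inv]
  ring

theorem fderiv_fun_div_apply (hf : DifferentiableAt ℝ f x) (hg : DifferentiableAt ℝ g x)
    (hg0 : g x ≠ 0) (v : E) :
    fderiv ℝ (fun y => f y / g y) x v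
      = (fderiv ℝ f x v * g x - f x * fderiv ℝ g x v) / g x ^ 2 := by
  simp only [div_eq_mul_inv]
  rw [fderiv_fun_mul_apply (g := fun y => (g y)⁻¹) hf (hg.inv hg0), fderiv_fun_inv_apply hg hg0]
  field_simp
  ring

theorem fderiv_comp_prodMk_apply {s : ℝ × ℝ → ℝ} (hs : DifferentiableAt ℝ s (f x, g x))
    (hf : DifferentiableAt ℝ f x) (hg : DifferentiableAt ℝ g x) (v : E) :
    fderiv ℝ (fun y => s (f y, g y)) x v
      = D1 s (f x, g x) * fderiv ℝ f x v + D2 s (f x, g x) * fderiv ℝ g x v := by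
  rw [show (fun y => s (f y, g y)) = s ∘ fun y => (f y, g y) from rfl,
    fderiv_comp x hs (hf.prodMk hg), ContinuousLinearMap.comp_apply,
    DifferentiableAt.fderiv_prodMk hf hg]
  have hsplit : ((fderiv ℝ f x v, fderiv ℝ g x v) : ℝ × ℝ)
      = fderiv ℝ f x v • ((1 : ℝ), (0 : ℝ)) + fderiv ℝ g x v • ((0 : ℝ), (1 : ℝ)) := by
    simp
  simp only [ContinuousLinearMap.prod_apply, hsplit, map_add, map_smul, smul_eq_mul, D1, D2]
  ring

end PointwiseCalculus

section Thermodynamics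

variable {s : ℝ × ℝ → ℝ} {x : ℝ × ℝ}

theorem isOpen_dom : IsOpen dom := by
  simpa [dom, Set.ofPred_and] using
    (isOpen_lt continuous_const continuous_fst).inter (isOpen_lt continuous_const continuous_snd)

theorem differentiableOn_fderiv_apply (hs : ContDiffOn ℝ 2 s dom) (v : ℝ × ℝ) :
    DifferentiableOn ℝ (fun y => fderiv ℝ s y v) dom :=
  ((hs.fderiv_of_isOpen isOpen_dom le_rfl).differentiableOn one_ne_zero).clm_apply
    (differentiableOn_const v)

theorem differentiableOn_sRho (hs : ContDiffOn ℝ 2 s dom) : DifferentiableOn ℝ (sRho s) dom :=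
  differentiableOn_fderiv_apply hs (1, 0)

theorem differentiableOn_sE (hs : ContDiffOn ℝ 2 s dom) : DifferentiableOn ℝ (sE s) dom :=
  differentiableOn_fderiv_apply hs (0, 1)

theorem D2_sRho_eq_sRhoE (hs : ContDiffOn ℝ 2 s dom) (hx : x ∈ dom) :
    D2 (sRho s) x = sRhoE s x := by
  have hsymm := (hs.contDiffAt (isOpen_dom.mem_nhds hx)).isSymmSndFDerivAt
    (by simp [minSmoothness_of_isRCLikeNormedField])
  have hd := ((hs.fderiv_of_isOpen isOpen_dom le_rfl).differentiableOn one_ne_zero).differentiableAt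
    (isOpen_dom.mem_nhds hx)
  change fderiv ℝ (fun y => fderiv ℝ s y (1, 0)) x (0, 1)
    = fderiv ℝ (fun y => fderiv ℝ s y (0, 1)) x (1, 0)
  rw [fderiv_clm_apply hd (differentiableAt_const _),
    fderiv_clm_apply hd (differentiableAt_const _)]
  simpa using hsymm (0, 1) (1, 0)

theorem dRho2sRho_eq (hs : ContDiffOn ℝ 2 s dom) (hx : x ∈ dom) :
    dRho2sRho s x = 2 * x.1 * sRho s x + x.1 ^ 2 * D1 (sRho s) x := by
  have hd : HasDerivAt (fun r => sRho s (r, x.2)) (D1 (sRho s) x) x.1 :=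
    ((differentiableOn_sRho hs).differentiableAt (isOpen_dom.mem_nhds hx)).hasFDerivAt
      |>.comp_hasDerivAt (x := x.1) ((hasDerivAt_id _).prodMk (hasDerivAt_const _ _))
  rw [dRho2sRho, ((hasDerivAt_pow 2 x.1).fun_mul hd).deriv]
  simp

theorem fderiv_press_apply (hs : ContDiffOn ℝ 2 s dom) (hx : x ∈ dom) (hse : sE s x ≠ 0)
    (v : ℝ × ℝ) :
    fderiv ℝ (press s) x v = (-(2 * x.1 * v.1 * sRho s x + x.1 ^ 2 * fderiv ℝ (sRho s) x v)
      * sE s x + x.1 ^ 2 * sRho s x * fderiv ℝ (sE s) x v) / sE s x ^ 2 := by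
  have hsρ := (differentiableOn_sRho hs).differentiableAt (isOpen_dom.mem_nhds hx)
  have hse' := (differentiableOn_sE hs).differentiableAt (isOpen_dom.mem_nhds hx)
  have hsq : fderiv ℝ (fun y : ℝ × ℝ => -y.1 ^ 2) x v = -(2 * x.1 * v.1) := by
    rw [fderiv_fun_neg, fderiv_fun_pow 2 differentiableAt_fst, fderiv_fst]
    simp
  change fderiv ℝ (fun y => -y.1 ^ 2 * sRho s y / sE s y) x v = _
  rw [fderiv_fun_div_apply (by fun_prop) hse' hse, fderiv_fun_mul_apply (by fun_prop) hsρ, hsq]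
  ring

theorem fderiv_temp_apply (hs : ContDiffOn ℝ 2 s dom) (hx : x ∈ dom) (hse : sE s x ≠ 0)
    (v : ℝ × ℝ) : fderiv ℝ (temp s) x v = -fderiv ℝ (sE s) x v / sE s x ^ 2 :=
  fderiv_fun_inv_apply ((differentiableOn_sE hs).differentiableAt (isOpen_dom.mem_nhds hx)) hse v

-- `c_p = wᵀ (-Σ)⁻¹ w` for `Σ = [[∂_ρ(ρ² s_ρ), ρ s_ρe], [ρ s_ρe, s_ee]]` and `w = (ρ s_ρ, s_e)`.
theorem cP_eq (hs : ContDiffOn ℝ 2 s dom) (hx : x ∈ dom) (hse : sE s x ≠ 0) :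
    cP s x = -(dRho2sRho s x * sE s x ^ 2 - 2 * (x.1 * sRhoE s x) * (x.1 * sRho s x) * sE s x
        + sEE s x * (x.1 * sRho s x) ^ 2)
      / (dRho2sRho s x * sEE s x - (x.1 * sRhoE s x) ^ 2) := by
  have hpρ : pRho s x = _ := fderiv_press_apply hs hx hse (1, 0)
  have hpe : pE s x = _ := fderiv_press_apply hs hx hse (0, 1)
  have htρ : tRho s x = _ := fderiv_temp_apply hs hx hse (1, 0)
  have hte : tE s x = _ := fderiv_temp_apply hs hx hse (0, 1)
  have hsρρ : fderiv ℝ (sRho s) x (1, 0) = D1 (sRho s) x := rfl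
  have hsρe : fderiv ℝ (sRho s) x (0, 1) = sRhoE s x := D2_sRho_eq_sRhoE hs hx
  have hseρ : fderiv ℝ (sE s) x (1, 0) = sRhoE s x := rfl
  have hsee : fderiv ℝ (sE s) x (0, 1) = sEE s x := rfl
  simp only [hsρρ, hsρe, hseρ, hsee] at hpρ hpe htρ hte
  have hden : pRho s x * tE s x - pE s x * tRho s x = detSigma s x / sE s x ^ 3 := by
    rw [hpρ, hpe, htρ, hte, detSigma, dRho2sRho_eq hs hx]
    field_simp
    ring
  have hnum : pRho s x * sE s x - pE s x * sRho s x
      = -(dRho2sRho s x * sE s x ^ 2 - 2 * (x.1 * sRhoE s x) * (x.1 * sRho s x) * sE s x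
        + sEE s x * (x.1 * sRho s x) ^ 2) / sE s x ^ 2 := by
    rw [hpρ, hpe, dRho2sRho_eq hs hx]
    field_simp
    ring
  have hdetEq : detSigma s x = dRho2sRho s x * sEE s x - (x.1 * sRhoE s x) ^ 2 := by
    unfold detSigma; ring
  rw [cP, hnum, hden, hdetEq]
  field_simp

end Thermodynamics

section QuadraticForms

variable {a b c : ℝ}

theorem quadForm_nonpos (ha : a < 0) (hdet : b ^ 2 ≤ a * c) (X Y : ℝ) :
    a * X ^ 2 + 2 * b * X * Y + c * Y ^ 2 ≤ 0 := by
  nlinarith [sq_nonneg (a * X + b * Y), mul_nonneg (sub_nonneg.2 hdet) (sq_nonneg Y)]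

theorem quadForm_neg (ha : a < 0) (hdet : b ^ 2 < a * c) {X : ℝ} (hX : X ≠ 0) (Y : ℝ) :
    a * X ^ 2 + 2 * b * X * Y + c * Y ^ 2 < 0 := by
  rcases eq_or_ne Y 0 with rfl | hY
  · nlinarith [sq_pos_of_ne_zero hX]
  · nlinarith [sq_nonneg (a * X + b * Y), mul_pos (sub_pos.2 hdet) (sq_pos_of_ne_zero hY)]

-- `hk` says `det (k₁ Σ + k₂ w wᵀ) > 0` for `Σ = [[a, b], [b, c]]`, because
-- `-(a w₂² - 2 b w₁ w₂ + c w₁²) / (a c - b²) = wᵀ (-Σ)⁻¹ w`.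
theorem quadForm_add_sq_nonpos {w₁ w₂ k₁ k₂ : ℝ} (ha : a < 0) (hdet : b ^ 2 < a * c)
    (hw₂ : w₂ ≠ 0) (hk₁ : 0 < k₁)
    (hk : 0 < k₁ * (-(a * w₂ ^ 2 - 2 * b * w₁ * w₂ + c * w₁ ^ 2) / (a * c - b ^ 2))⁻¹ - k₂)
    (X Y : ℝ) :
    k₁ * (a * X ^ 2 + 2 * b * X * Y + c * Y ^ 2) + k₂ * (w₁ * X + w₂ * Y) ^ 2 ≤ 0 := by
  have hN : a * w₂ ^ 2 - 2 * b * w₁ * w₂ + c * w₁ ^ 2 < 0 := by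
    have := quadForm_neg ha hdet hw₂ (-w₁); linarith
  have hpos : 0 < k₁ * (a * c - b ^ 2) + k₂ * (a * w₂ ^ 2 - 2 * b * w₁ * w₂ + c * w₁ ^ 2) := by
    rw [inv_div, mul_div_assoc', sub_pos, lt_div_iff₀ (neg_pos.2 hN)] at hk
    linarith
  set A := k₁ * a + k₂ * w₁ ^ 2
  set B := k₁ * b + k₂ * w₁ * w₂
  set C := k₁ * c + k₂ * w₂ ^ 2
  have hdetM : B ^ 2 < A * C := by
    nlinarith [mul_pos hk₁ hpos]
  -- At `(w₂, -w₁)`, orthogonal to `w`, the form is `k₁ Σ < 0`, so it is not positive definite.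
  have hA : A < 0 := by
    by_contra! hA
    have hA' : 0 < A := lt_of_le_of_ne hA fun h => by rw [← h] at hdetM; nlinarith [sq_nonneg B]
    have := quadForm_nonpos (a := -A) (b := -B) (c := -C) (by linarith) (by nlinarith) w₂ (-w₁)
    nlinarith [mul_neg_of_pos_of_neg hk₁ hN]
  have := quadForm_nonpos hA hdetM.le X Y
  linear_combination this

end QuadraticForms

section StateFields

variable {s : ℝ × ℝ → ℝ} {E : Type*} [NormedAddCommGroup E] [NormedSpace ℝ E]
  {ρ e : E → ℝ} {y : E}

-- `T (e s_e - ρ s_ρ) = e + p/ρ`, the specific enthalpy, in the form in which it multiplies `f`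
-- in the heat flux `l`.
def enthalpy (s : ℝ × ℝ → ℝ) (x : ℝ × ℝ) : ℝ := (sE s x)⁻¹ * (x.2 * sE s x - x.1 * sRho s x)

theorem sE_mul_enthalpy {x : ℝ × ℝ} (hse : sE s x ≠ 0) :
    sE s x * enthalpy s x = x.2 * sE s x - x.1 * sRho s x := by
  rw [enthalpy]; field_simp

theorem differentiableAt_comp_state {g : ℝ × ℝ → ℝ} (hg : DifferentiableOn ℝ g dom)
    (hy : (ρ y, e y) ∈ dom) (hρ : DifferentiableAt ℝ ρ y) (he : DifferentiableAt ℝ e y) :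
    DifferentiableAt ℝ (fun r => g (ρ r, e r)) y :=
  (hg.differentiableAt (isOpen_dom.mem_nhds hy)).comp y (hρ.prodMk he)

theorem differentiable_comp_state {g : ℝ × ℝ → ℝ} (hg : DifferentiableOn ℝ g dom)
    (hρ : Differentiable ℝ ρ) (he : Differentiable ℝ e) (hstate : ∀ r, (ρ r, e r) ∈ dom) :
    Differentiable ℝ (fun r => g (ρ r, e r)) :=
  fun r => differentiableAt_comp_state hg (hstate r) (hρ r) (he r)

theorem differentiableOn_press (hs : ContDiffOn ℝ 2 s dom) (hse : ∀ x ∈ dom, 0 < sE s x) :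
    DifferentiableOn ℝ (press s) dom := by
  change DifferentiableOn ℝ (fun x => -x.1 ^ 2 * sRho s x / sE s x) dom
  simp only [div_eq_mul_inv]
  exact ((differentiableOn_fst.pow 2).neg.mul (differentiableOn_sRho hs)).mul
    ((differentiableOn_sE hs).inv fun y hy => (hse y hy).ne')

theorem differentiableOn_enthalpy (hs : ContDiffOn ℝ 2 s dom) (hse : ∀ x ∈ dom, 0 < sE s x) :
    DifferentiableOn ℝ (enthalpy s) dom :=
  ((differentiableOn_sE hs).inv fun y hy => (hse y hy).ne').mul
    ((differentiableOn_snd.mul (differentiableOn_sE hs)).sub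
      (differentiableOn_fst.mul (differentiableOn_sRho hs)))

theorem fderiv_entropy_apply (hs : ContDiffOn ℝ 2 s dom) (hy : (ρ y, e y) ∈ dom)
    (hρ : DifferentiableAt ℝ ρ y) (he : DifferentiableAt ℝ e y) (v : E) :
    fderiv ℝ (fun r => s (ρ r, e r)) y v
      = sRho s (ρ y, e y) * fderiv ℝ ρ y v + sE s (ρ y, e y) * fderiv ℝ e y v :=
  fderiv_comp_prodMk_apply ((hs.differentiableOn two_ne_zero).differentiableAt
    (isOpen_dom.mem_nhds hy)) hρ he v

theorem fderiv_sRho_apply (hs : ContDiffOn ℝ 2 s dom) (hy : (ρ y, e y) ∈ dom)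
    (hρ : DifferentiableAt ℝ ρ y) (he : DifferentiableAt ℝ e y) (v : E) :
    fderiv ℝ (fun r => sRho s (ρ r, e r)) y v
      = D1 (sRho s) (ρ y, e y) * fderiv ℝ ρ y v + sRhoE s (ρ y, e y) * fderiv ℝ e y v := by
  rw [fderiv_comp_prodMk_apply ((differentiableOn_sRho hs).differentiableAt
    (isOpen_dom.mem_nhds hy)) hρ he v, D2_sRho_eq_sRhoE hs hy]

theorem fderiv_sE_apply (hs : ContDiffOn ℝ 2 s dom) (hy : (ρ y, e y) ∈ dom)
    (hρ : DifferentiableAt ℝ ρ y) (he : DifferentiableAt ℝ e y) (v : E) :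
    fderiv ℝ (fun r => sE s (ρ r, e r)) y v
      = sRhoE s (ρ y, e y) * fderiv ℝ ρ y v + sEE s (ρ y, e y) * fderiv ℝ e y v :=
  fderiv_comp_prodMk_apply ((differentiableOn_sE hs).differentiableAt
    (isOpen_dom.mem_nhds hy)) hρ he v

theorem fderiv_enthalpy_apply (hs : ContDiffOn ℝ 2 s dom) (hy : (ρ y, e y) ∈ dom)
    (hse : sE s (ρ y, e y) ≠ 0) (hρ : DifferentiableAt ℝ ρ y) (he : DifferentiableAt ℝ e y)
    (v : E) :
    fderiv ℝ (fun r => enthalpy s (ρ r, e r)) y v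
      = -fderiv ℝ (fun r => sE s (ρ r, e r)) y v / sE s (ρ y, e y) ^ 2
          * (e y * sE s (ρ y, e y) - ρ y * sRho s (ρ y, e y))
        + (sE s (ρ y, e y))⁻¹ * (fderiv ℝ e y v * sE s (ρ y, e y)
          + e y * fderiv ℝ (fun r => sE s (ρ r, e r)) y v
          - (fderiv ℝ ρ y v * sRho s (ρ y, e y)
            + ρ y * fderiv ℝ (fun r => sRho s (ρ r, e r)) y v)) := by
  have hsρ := differentiableAt_comp_state (differentiableOn_sRho hs) hy hρ he
  have hse' := differentiableAt_comp_state (differentiableOn_sE hs) hy hρ he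
  change fderiv ℝ (fun r => (sE s (ρ r, e r))⁻¹
    * (e r * sE s (ρ r, e r) - ρ r * sRho s (ρ r, e r))) y v = _
  rw [fderiv_fun_mul_apply (f := fun r => (sE s (ρ r, e r))⁻¹) (hse'.inv hse) (by fun_prop),
    fderiv_fun_inv_apply hse' hse,
    fderiv_fun_sub, sub_apply, fderiv_fun_mul_apply he hse',
    fderiv_fun_mul_apply hρ hsρ]
  · ring
  all_goals fun_prop

end StateFields

theorem dissipation_bracket_nonneg {s : ℝ × ℝ → ℝ} {x : ℝ × ℝ} {F : ℝ → ℝ}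
    (hs : ContDiffOn ℝ 2 s dom) (hconv : Convexity s) (hx : x ∈ dom) (hse : 0 < sE s x)
    (hF' : 0 < deriv F (s x)) (hF'' : 0 < deriv F (s x) * (cP s x)⁻¹ - deriv (deriv F) (s x))
    {X Y dS dsρ dse dψ dη : ℝ}
    (hdS : dS = sRho s x * X + sE s x * Y)
    (hdsρ : dsρ = D1 (sRho s) x * X + sRhoE s x * Y)
    (hdse : dse = sRhoE s x * X + sEE s x * Y)
    (hdψ : dψ = deriv (deriv F) (s x) * dS * sE s x + deriv F (s x) * dse)
    (hdη : dη = -dse / sE s x ^ 2 * (x.2 * sE s x - x.1 * sRho s x)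
      + (sE s x)⁻¹ * (Y * sE s x + x.2 * dse - (X * sRho s x + x.1 * dsρ))) :
    0 ≤ deriv F (s x) * (sE s x * X * dη - X * dS) - x.1 * (sE s x)⁻¹ * dS * dψ := by
  obtain ⟨hA, -, hdet⟩ := hconv x hx
  rw [detSigma] at hdet
  have hQ := quadForm_add_sq_nonpos (b := x.1 * sRhoE s x) (c := sEE s x) (w₁ := x.1 * sRho s x)
    (k₂ := deriv (deriv F) (s x)) hA (by linear_combination hdet) hse.ne' hF'
    (by rwa [cP_eq hs hx hse.ne'] at hF'') X (x.1 * Y)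
  rw [dRho2sRho_eq hs hx] at hQ
  subst hdS hdsρ hdse hdψ hdη
  -- `ρ` times the bracket is minus the left side of `hQ`.
  refine (mul_nonneg_iff_of_pos_left hx.1).1 ?_
  refine (neg_nonneg.2 hQ).trans_eq ?_
  field_simp
  ring

section SpaceTime

variable {n : ℕ}

abbrev SpaceTime (n : ℕ) : Type := ℝ × (Fin n → ℝ)

def divergence (w : SpaceTime n → Fin n → ℝ) (q : SpaceTime n) : ℝ :=
  ∑ i, Dx i (fun r => w r i) q

def derivAlong (w : Fin n → ℝ) (φ : SpaceTime n → ℝ) (q : SpaceTime n) : ℝ :=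
  fderiv ℝ φ q (0, w)

def kineticEnergy (u : SpaceTime n → Fin n → ℝ) (r : SpaceTime n) : ℝ :=
  1 / 2 * ∑ i, u r i ^ 2

variable {w w' : SpaceTime n → Fin n → ℝ} {φ : SpaceTime n → ℝ} {q : SpaceTime n}

theorem derivAlong_eq_sum (w : Fin n → ℝ) (φ : SpaceTime n → ℝ) (q : SpaceTime n) :
    derivAlong w φ q = ∑ i, w i * Dx i φ q := by
  have hw : ((0 : ℝ), w) = ∑ i, w i • ((0 : ℝ), (Pi.single i 1 : Fin n → ℝ)) := by
    ext j
    · simp [Prod.fst_sum]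
    · simp [Prod.snd_sum, Finset.sum_apply, Pi.single_apply]
  simp only [derivAlong, Dx, hw, map_sum, map_smul, smul_eq_mul]

theorem divergence_add (hw : DifferentiableAt ℝ w q) (hw' : DifferentiableAt ℝ w' q) :
    divergence (fun r i => w r i + w' r i) q = divergence w q + divergence w' q := by
  simp only [divergence, Dx, ← Finset.sum_add_distrib]
  refine Finset.sum_congr rfl fun i _ => ?_
  rw [fderiv_fun_add (differentiableAt_pi.1 hw i) (differentiableAt_pi.1 hw' i)]
  rfl

theorem divergence_sub (hw : DifferentiableAt ℝ w q) (hw' : DifferentiableAt ℝ w' q) :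
    divergence (fun r i => w r i - w' r i) q = divergence w q - divergence w' q := by
  simp only [divergence, Dx, ← Finset.sum_sub_distrib]
  refine Finset.sum_congr rfl fun i _ => ?_
  rw [fderiv_fun_sub (differentiableAt_pi.1 hw i) (differentiableAt_pi.1 hw' i)]
  rfl

theorem divergence_sum {ι : Type*} [Fintype ι] {w : ι → SpaceTime n → Fin n → ℝ}
    (hw : ∀ j, DifferentiableAt ℝ (w j) q) :
    divergence (fun r i => ∑ j, w j r i) q = ∑ j, divergence (w j) q := by
  simp only [divergence, Dx]
  rw [Finset.sum_comm]
  refine Finset.sum_congr rfl fun i _ => ?_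
  rw [fderiv_fun_sum fun j _ => differentiableAt_pi.1 (hw j) i, sum_apply]

theorem divergence_mul (hw : DifferentiableAt ℝ w q) (hφ : DifferentiableAt ℝ φ q) :
    divergence (fun r i => w r i * φ r) q = φ q * divergence w q + derivAlong (w q) φ q := by
  simp only [divergence, Dx, derivAlong_eq_sum, Finset.mul_sum, ← Finset.sum_add_distrib]
  refine Finset.sum_congr rfl fun i _ => ?_
  rw [fderiv_fun_mul_apply (differentiableAt_pi.1 hw i) hφ]
  ring

theorem differentiable_kineticEnergy {u : SpaceTime n → Fin n → ℝ} (hu : Differentiable ℝ u) :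
    Differentiable ℝ (kineticEnergy u) := by
  unfold kineticEnergy; fun_prop

theorem fderiv_kineticEnergy_apply {u : SpaceTime n → Fin n → ℝ} (hu : DifferentiableAt ℝ u q)
    (v : SpaceTime n) :
    fderiv ℝ (kineticEnergy u) q v = ∑ j, u q j * fderiv ℝ (fun r => u r j) q v := by
  have hj := differentiableAt_pi.1 hu
  change fderiv ℝ (fun r => 1 / 2 * ∑ i, u r i ^ 2) q v = _
  rw [fderiv_const_mul (by fun_prop),
    fderiv_fun_sum (u := Finset.univ) (A := fun j r => u r j ^ 2) fun j _ => (hj j).pow 2]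
  simp only [smul_apply, sum_apply, smul_eq_mul, Finset.mul_sum]
  refine Finset.sum_congr rfl fun j _ => ?_
  rw [fderiv_fun_pow 2 (hj j)]
  simp
  ring

end SpaceTime

section Transport

variable {n : ℕ} {ρ e p : SpaceTime n → ℝ} {u f l : SpaceTime n → Fin n → ℝ}
  {G : SpaceTime n → Fin n → Fin n → ℝ} {q : SpaceTime n}

theorem differentiable_velocity_internalEnergy {m : SpaceTime n → Fin n → ℝ}
    {E : SpaceTime n → ℝ} (hρ : Differentiable ℝ ρ) (hm : Differentiable ℝ m)
    (hE : Differentiable ℝ E) (hρ0 : ∀ r, ρ r ≠ 0) (hu : ∀ r i, u r i = m r i / ρ r)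
    (he : ∀ r, e r = E r / ρ r - kineticEnergy u r) :
    Differentiable ℝ u ∧ Differentiable ℝ e := by
  obtain rfl : u = fun r => (ρ r)⁻¹ • m r :=
    funext fun r => funext fun i => by simp [hu, div_eq_inv_mul]
  have hu' : Differentiable ℝ fun r => (ρ r)⁻¹ • m r := (hρ.inv hρ0).smul hm
  obtain rfl : e = fun r => E r * (ρ r)⁻¹ - kineticEnergy (fun r => (ρ r)⁻¹ • m r) r :=
    funext fun r => by rw [he, div_eq_mul_inv]
  exact ⟨hu', (hE.mul (hρ.inv hρ0)).sub (differentiable_kineticEnergy hu')⟩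

theorem mass_transport {m : SpaceTime n → Fin n → ℝ} (hρ : DifferentiableAt ℝ ρ q)
    (hu : DifferentiableAt ℝ u q) (hm : ∀ r i, m r i = u r i * ρ r)
    (hmass : Dt ρ q + divergence m q - divergence f q = 0) :
    Dt ρ q + derivAlong (u q) ρ q + ρ q * divergence u q = divergence f q := by
  obtain rfl : m = fun r i => u r i * ρ r := funext fun r => funext (hm r)
  rw [divergence_mul hu hρ] at hmass
  linarith

theorem momentum_transport {m : SpaceTime n → Fin n → ℝ} {g : SpaceTime n → Fin n → Fin n → ℝ}
    (j : Fin n) (hρ : DifferentiableAt ℝ ρ q) (hu : DifferentiableAt ℝ u q)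
    (hf : DifferentiableAt ℝ f q) (hG : DifferentiableAt ℝ G q) (hm : ∀ r i, m r i = u r i * ρ r)
    (hg : ∀ r i j, g r i j = G r i j + f r i * u r j)
    (hmass : Dt ρ q + derivAlong (u q) ρ q + ρ q * divergence u q = divergence f q)
    (hmom : Dt (fun r => m r j) q + divergence (fun r i => u r i * m r j) q + Dx j p q
      - divergence (fun r i => g r i j) q = 0) :
    ρ q * (Dt (fun r => u r j) q + derivAlong (u q) (fun r => u r j) q) + Dx j p q
      = divergence (fun r i => G r i j) q + derivAlong (f q) (fun r => u r j) q := by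
  obtain rfl : m = fun r i => u r i * ρ r := funext fun r => funext (hm r)
  obtain rfl : g = fun r i j => G r i j + f r i * u r j :=
    funext fun r => funext fun i => funext (hg r i)
  have huj : DifferentiableAt ℝ (fun r => u r j) q := differentiableAt_pi.1 hu j
  rw [divergence_mul hu, divergence_add, divergence_mul hf huj] at hmom
  · simp only [Dt, derivAlong, fderiv_fun_mul_apply huj hρ] at hmom hmass ⊢
    linear_combination hmom - u q j * hmass
  all_goals fun_prop

theorem kinetic_energy_balance (hu : DifferentiableAt ℝ u q)
    (hmom : ∀ j, ρ q * (Dt (fun r => u r j) q + derivAlong (u q) (fun r => u r j) q) + Dx j p q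
      = divergence (fun r i => G r i j) q + derivAlong (f q) (fun r => u r j) q) :
    ρ q * (Dt (kineticEnergy u) q + derivAlong (u q) (kineticEnergy u) q) + derivAlong (u q) p q
      = ∑ j, u q j * divergence (fun r i => G r i j) q + derivAlong (f q) (kineticEnergy u) q := by
  simp only [Dt, derivAlong, fderiv_kineticEnergy_apply hu] at hmom ⊢
  rw [← derivAlong, derivAlong_eq_sum]
  simp only [mul_add, Finset.mul_sum, ← Finset.sum_add_distrib]
  refine Finset.sum_congr rfl fun j _ => ?_
  linear_combination u q j * hmom j

theorem internal_energy_balance {E : SpaceTime n → ℝ} {g : SpaceTime n → Fin n → Fin n → ℝ}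
    {h : SpaceTime n → Fin n → ℝ} (hρ : DifferentiableAt ℝ ρ q) (hu : DifferentiableAt ℝ u q)
    (he : DifferentiableAt ℝ e q) (hp : DifferentiableAt ℝ p q) (hf : DifferentiableAt ℝ f q)
    (hl : DifferentiableAt ℝ l q) (hG : DifferentiableAt ℝ G q) (hρ0 : ∀ r, ρ r ≠ 0)
    (hE : ∀ r, e r = E r / ρ r - kineticEnergy u r)
    (hg : ∀ r i j, g r i j = G r i j + f r i * u r j)
    (hh : ∀ r i, h r i = l r i - kineticEnergy u r * f r i)
    (hmass : Dt ρ q + derivAlong (u q) ρ q + ρ q * divergence u q = divergence f q)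
    (hkin : ρ q * (Dt (kineticEnergy u) q + derivAlong (u q) (kineticEnergy u) q)
      + derivAlong (u q) p q
      = ∑ j, u q j * divergence (fun r i => G r i j) q + derivAlong (f q) (kineticEnergy u) q)
    (henergy : Dt E q + divergence (fun r i => u r i * (E r + p r)) q
      - divergence (fun r i => h r i + ∑ j, g r i j * u r j) q = 0) :
    ρ q * (Dt e q + derivAlong (u q) e q) + e q * divergence f q + p q * divergence u q
      = divergence l q + ∑ i, ∑ j, G q i j * Dx i (fun r => u r j) q := by
  obtain rfl : E = fun r => ρ r * (e r + kineticEnergy u r) :=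
    funext fun r => by rw [hE r]; field_simp [hρ0 r]; ring
  obtain rfl : g = fun r i j => G r i j + f r i * u r j :=
    funext fun r => funext fun i => funext (hg r i)
  obtain rfl : h = fun r i => l r i - kineticEnergy u r * f r i :=
    funext fun r => funext (hh r)
  have hflux : (fun r i => l r i - kineticEnergy u r * f r i
      + ∑ j, (G r i j + f r i * u r j) * u r j)
      = fun r i => l r i + f r i * kineticEnergy u r + ∑ j, G r i j * u r j := by
    funext r i
    simp only [kineticEnergy, add_mul, Finset.sum_add_distrib, mul_assoc, ← Finset.mul_sum, ← sq]
    ring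
  have hstress : ∑ i, ∑ j, G q i j * Dx i (fun r => u r j) q
      = ∑ j, derivAlong (fun i => G q i j) (fun r => u r j) q := by
    rw [Finset.sum_comm]; simp only [derivAlong_eq_sum]
  have hk : DifferentiableAt ℝ (kineticEnergy u) q := by unfold kineticEnergy; fun_prop
  rw [hflux, divergence_mul hu, divergence_add, divergence_add hl, divergence_mul hf hk,
    divergence_sum] at henergy
  · have hGu : ∀ j, divergence (fun r i => G r i j * u r j) q = u q j
        * divergence (fun r i => G r i j) q + derivAlong (fun i => G q i j) (fun r => u r j) q :=
      fun j => divergence_mul (by fun_prop) (by fun_prop)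
    simp only [hGu, Finset.sum_add_distrib, ← hstress] at henergy
    simp (disch := fun_prop) only [Dt, derivAlong, fderiv_fun_mul_apply, fderiv_fun_add_apply]
      at henergy hmass hkin ⊢
    linear_combination henergy - hkin - (e q + kineticEnergy u q) * hmass
  all_goals fun_prop

theorem entropy_balance {s : ℝ × ℝ → ℝ} (hs : ContDiffOn ℝ 2 s dom) (hq : (ρ q, e q) ∈ dom)
    (hse : sE s (ρ q, e q) ≠ 0) (hρ : DifferentiableAt ℝ ρ q) (he : DifferentiableAt ℝ e q)
    (hmass : Dt ρ q + derivAlong (u q) ρ q + ρ q * divergence u q = divergence f q)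
    (hint : ρ q * (Dt e q + derivAlong (u q) e q) + e q * divergence f q
      + press s (ρ q, e q) * divergence u q
      = divergence l q + ∑ i, ∑ j, G q i j * Dx i (fun r => u r j) q) :
    ρ q * (Dt (fun r => s (ρ r, e r)) q + derivAlong (u q) (fun r => s (ρ r, e r)) q)
      = sE s (ρ q, e q) * (divergence l q - enthalpy s (ρ q, e q) * divergence f q
        + ∑ i, ∑ j, G q i j * Dx i (fun r => u r j) q) := by
  have hp : sE s (ρ q, e q) * press s (ρ q, e q) = -ρ q ^ 2 * sRho s (ρ q, e q) := by
    rw [press]; field_simp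
  have hη := sE_mul_enthalpy hse
  simp only [Dt, derivAlong, fderiv_entropy_apply hs hq hρ he] at hmass hint ⊢
  linear_combination ρ q * sRho s (ρ q, e q) * hmass + sE s (ρ q, e q) * hint
    + divergence f q * hη - divergence u q * hp

theorem mass_and_entropy_transport {s : ℝ × ℝ → ℝ} {m : SpaceTime n → Fin n → ℝ}
    {E : SpaceTime n → ℝ} {g : SpaceTime n → Fin n → Fin n → ℝ} {h : SpaceTime n → Fin n → ℝ}
    (hs : ContDiffOn ℝ 2 s dom) (hse : ∀ x ∈ dom, 0 < sE s x) (hstate : ∀ r, (ρ r, e r) ∈ dom)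
    (hρ : Differentiable ℝ ρ) (hu : Differentiable ℝ u) (he : Differentiable ℝ e)
    (hf : Differentiable ℝ f) (hl : Differentiable ℝ l) (hG : Differentiable ℝ G)
    (hρ0 : ∀ r, ρ r ≠ 0) (hm : ∀ r i, m r i = u r i * ρ r)
    (hE : ∀ r, e r = E r / ρ r - kineticEnergy u r)
    (hg : ∀ r i j, g r i j = G r i j + f r i * u r j)
    (hh : ∀ r i, h r i = l r i - kineticEnergy u r * f r i)
    (hmass : Dt ρ q + divergence m q - divergence f q = 0)
    (hmom : ∀ j, Dt (fun r => m r j) q + divergence (fun r i => u r i * m r j) q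
      + Dx j (fun r => press s (ρ r, e r)) q - divergence (fun r i => g r i j) q = 0)
    (henergy : Dt E q + divergence (fun r i => u r i * (E r + press s (ρ r, e r))) q
      - divergence (fun r i => h r i + ∑ j, g r i j * u r j) q = 0) :
    Dt ρ q + derivAlong (u q) ρ q + ρ q * divergence u q = divergence f q ∧
    ρ q * (Dt (fun r => s (ρ r, e r)) q + derivAlong (u q) (fun r => s (ρ r, e r)) q)
      = sE s (ρ q, e q) * (divergence l q - enthalpy s (ρ q, e q) * divergence f q
        + ∑ i, ∑ j, G q i j * Dx i (fun r => u r j) q) := by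
  have hmass' := mass_transport (hρ q) (hu q) hm hmass
  have hkin := kinetic_energy_balance (hu q) fun j =>
    momentum_transport j (hρ q) (hu q) (hf q) (hG q) hm hg hmass' (hmom j)
  have hint := internal_energy_balance (hρ q) (hu q) (he q)
    (differentiable_comp_state (differentiableOn_press hs hse) hρ he hstate q)
    (hf q) (hl q) (hG q) hρ0 hE hg hh hmass' hkin henergy
  exact ⟨hmass', entropy_balance hs (hstate q) (hse _ (hstate q)).ne' (hρ q) (he q) hmass' hint⟩

theorem generalized_entropy_balance {F : ℝ → ℝ} {S β η a d : SpaceTime n → ℝ}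
    (hρ : Differentiable ℝ ρ) (hu : Differentiable ℝ u) (hf : Differentiable ℝ f)
    (hl : Differentiable ℝ l) (hS : Differentiable ℝ S) (hβ : Differentiable ℝ β)
    (hη : Differentiable ℝ η) (hF : Differentiable ℝ F) (hF' : Differentiable ℝ (deriv F))
    (hβ0 : ∀ r, β r ≠ 0)
    (hfdef : ∀ r i, f r i = a r * Dx i ρ r)
    (hldef : ∀ r i, l r i = η r * f r i + d r * ρ r * (β r)⁻¹ * Dx i S r)
    (hmass : Dt ρ q + derivAlong (u q) ρ q + ρ q * divergence u q = divergence f q)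
    (hentropy : ρ q * (Dt S q + derivAlong (u q) S q) = β q * (divergence l q
      - η q * divergence f q + ∑ i, ∑ j, G q i j * Dx i (fun r => u r j) q)) :
    Dt (fun r => ρ r * F (S r)) q
      + divergence (fun r i => u r i * (ρ r * F (S r))
          - d r * ρ r * Dx i (fun r' => F (S r')) r - a r * F (S r) * Dx i ρ r) q
      = deriv F (S q) * β q * ∑ i, ∑ j, G q i j * Dx i (fun r => u r j) q
        + (deriv F (S q) * (β q * derivAlong (f q) η q - derivAlong (f q) S q)
          - derivAlong (fun i => l q i - f q i * η q) (fun r => deriv F (S r) * β r) q) := by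
  have hflux : (fun r i => u r i * (ρ r * F (S r))
      - d r * ρ r * Dx i (fun r' => F (S r')) r - a r * F (S r) * Dx i ρ r)
      = fun r i => u r i * (ρ r * F (S r)) - (l r i - f r i * η r) * (deriv F (S r) * β r)
        - f r i * F (S r) := by
    -- the heat flux absorbs `d ρ ∇F(S) = F'(S) β (l - η f)`: no second derivative of `S` remains
    funext r i
    rw [show Dx i (fun r' => F (S r')) r = deriv F (S r) * Dx i S r from
      fderiv_comp_apply_eq_deriv_mul (hF _) (hS r) _, hldef r i, hfdef r i]
    field_simp [hβ0 r]
    ring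
  rw [hflux, divergence_sub, divergence_sub, divergence_mul (hu q), divergence_mul,
    divergence_sub (hl q), divergence_mul (hf q) (hη q), divergence_mul (hf q)]
  · simp (disch := fun_prop) only [Dt, derivAlong, fderiv_fun_mul_apply,
      fderiv_comp_apply_eq_deriv_mul] at hmass hentropy ⊢
    linear_combination F (S q) * hmass + deriv F (S q) * hentropy
  all_goals fun_prop

theorem entropy_dissipation_nonneg {s : ℝ × ℝ → ℝ} {F : ℝ → ℝ} {d : ℝ}
    (hs : ContDiffOn ℝ 2 s dom) (hconv : Convexity s) (hq : (ρ q, e q) ∈ dom)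
    (hse : 0 < sE s (ρ q, e q)) (hF : DifferentiableAt ℝ (deriv F) (s (ρ q, e q)))
    (hF' : 0 < deriv F (s (ρ q, e q)))
    (hF'' : 0 < deriv F (s (ρ q, e q)) * (cP s (ρ q, e q))⁻¹ - deriv (deriv F) (s (ρ q, e q)))
    (hρ : DifferentiableAt ℝ ρ q) (he : DifferentiableAt ℝ e q) (hd : 0 ≤ d)
    (hf : ∀ i, f q i = d * Dx i ρ q)
    (hl : ∀ i, l q i - f q i * enthalpy s (ρ q, e q)
      = d * ρ q * (sE s (ρ q, e q))⁻¹ * Dx i (fun r => s (ρ r, e r)) q) :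
    0 ≤ deriv F (s (ρ q, e q)) * (sE s (ρ q, e q)
          * derivAlong (f q) (fun r => enthalpy s (ρ r, e r)) q
        - derivAlong (f q) (fun r => s (ρ r, e r)) q)
      - derivAlong (fun i => l q i - f q i * enthalpy s (ρ q, e q))
          (fun r => deriv F (s (ρ r, e r)) * sE s (ρ r, e r)) q := by
  have hS := differentiableAt_comp_state (hs.differentiableOn two_ne_zero) hq hρ he
  have hβ := differentiableAt_comp_state (differentiableOn_sE hs) hq hρ he
  rw [show (fun i => l q i - f q i * enthalpy s (ρ q, e q)) = _ from funext hl,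
    show f q = _ from funext hf]
  simp only [derivAlong_eq_sum, Finset.mul_sum, ← Finset.sum_sub_distrib]
  refine Finset.sum_nonneg fun i _ => ?_
  have hψ : Dx i (fun r => deriv F (s (ρ r, e r)) * sE s (ρ r, e r)) q
      = deriv (deriv F) (s (ρ q, e q)) * Dx i (fun r => s (ρ r, e r)) q * sE s (ρ q, e q)
        + deriv F (s (ρ q, e q)) * Dx i (fun r => sE s (ρ r, e r)) q := by
    have hF'S : DifferentiableAt ℝ (fun r => deriv F (s (ρ r, e r))) q :=
      hF.comp (f := fun r => s (ρ r, e r)) q hS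
    simp only [Dx]
    rw [fderiv_fun_mul_apply hF'S hβ,
      fderiv_comp_apply_eq_deriv_mul (f := fun r => s (ρ r, e r)) hF hS]
    ring
  have hb := dissipation_bracket_nonneg hs hconv hq hse hF' hF''
    (fderiv_entropy_apply hs hq hρ he _) (fderiv_sRho_apply hs hq hρ he _)
    (fderiv_sE_apply hs hq hρ he _) hψ (fderiv_enthalpy_apply hs hq hse.ne' hρ he _)
  convert mul_nonneg hd hb using 1
  simp only [Dx]
  ring

end Transport

theorem entropy_inequality_of_a_eq_d_general
    (n : ℕ)
    (s : ℝ × ℝ → ℝ) (hs : ContDiffOn ℝ 2 s dom)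
    (hsepos : ∀ x ∈ dom, 0 < sE s x) (hconv : Convexity s)
    -- the fields of the solution
    (ρ E : ℝ × (Fin n → ℝ) → ℝ)
    (m fvec lvec : ℝ × (Fin n → ℝ) → Fin n → ℝ)
    (G : ℝ × (Fin n → ℝ) → Fin n → Fin n → ℝ)
    (hρ : ContDiff ℝ 2 ρ) (hE : ContDiff ℝ 2 E) (hm : ContDiff ℝ 2 m)
    (hfvec : ContDiff ℝ 2 fvec) (hlvec : ContDiff ℝ 2 lvec) (hG : ContDiff ℝ 2 G)
    (hρpos : ∀ q, 0 < ρ q)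
    -- derived fields: velocity, internal energy, entropy, pressure
    (u : ℝ × (Fin n → ℝ) → Fin n → ℝ) (hu : ∀ q i, u q i = m q i / ρ q)
    (eI : ℝ × (Fin n → ℝ) → ℝ)
    (heI : ∀ q, eI q = E q / ρ q - (1 / 2) * ∑ i, (u q i) ^ 2)
    (heIpos : ∀ q, 0 < eI q)
    (S seF sρF pF : ℝ × (Fin n → ℝ) → ℝ)
    (hS : ∀ q, S q = s (ρ q, eI q))
    (hseF : ∀ q, seF q = sE s (ρ q, eI q))
    (hsρF : ∀ q, sρF q = sRho s (ρ q, eI q))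
    (hpF : ∀ q, pF q = -(ρ q) ^ 2 * sρF q / seF q)
    -- the viscous fluxes `𝕘 = 𝔾 + f⊗u`, `h = l - ½|u|² f`
    (g : ℝ × (Fin n → ℝ) → Fin n → Fin n → ℝ)
    (hg : ∀ q i j, g q i j = G q i j + fvec q i * u q j)
    (h : ℝ × (Fin n → ℝ) → Fin n → ℝ)
    (hh : ∀ q i, h q i = lvec q i - (1 / 2) * (∑ k, (u q k) ^ 2) * fvec q i)
    -- structural assumptions
    (hGpos : ∀ q : ℝ × (Fin n → ℝ), 0 ≤ q.1 →
      0 ≤ ∑ i, ∑ j, G q i j * Dx i (fun r => u r j) q)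
    (acoef dcoef : ℝ × ℝ → ℝ)
    (hdc : ∀ y : ℝ × ℝ, 0 ≤ dcoef y)
    (hfdef : ∀ q i, fvec q i = acoef (ρ q, eI q) * Dx i ρ q)
    (hldef : ∀ q i, lvec q i = (seF q)⁻¹ * (eI q * seF q - ρ q * sρF q) * fvec q i
      + dcoef (ρ q, eI q) * ρ q * (seF q)⁻¹ * Dx i S q)
    -- the key assumption `a = d`
    (had : ∀ y : ℝ × ℝ, acoef y = dcoef y)
    -- the regularized Euler system
    (mass : ∀ q : ℝ × (Fin n → ℝ), 0 ≤ q.1 →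
      Dt ρ q + (∑ i, Dx i (fun r => m r i) q) - (∑ i, Dx i (fun r => fvec r i) q) = 0)
    (momentum : ∀ q : ℝ × (Fin n → ℝ), 0 ≤ q.1 → ∀ j,
      Dt (fun r => m r j) q + (∑ i, Dx i (fun r => u r i * m r j) q) + Dx j pF q
        - (∑ i, Dx i (fun r => g r i j) q) = 0)
    (energy : ∀ q : ℝ × (Fin n → ℝ), 0 ≤ q.1 →
      Dt E q + (∑ i, Dx i (fun r => u r i * (E r + pF r)) q)
        - (∑ i, Dx i (fun r => h r i + ∑ j, g r i j * u r j) q) = 0)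
    -- a generalized entropy `ρ f(s)`
    (F : ℝ → ℝ) (hF : ContDiff ℝ 2 F)
    (hF' : ∀ z ∈ dom, 0 < deriv F (s z))
    (hF'' : ∀ z ∈ dom, 0 < deriv F (s z) * (cP s z)⁻¹ - deriv (deriv F) (s z)) :
    -- the generalized entropy inequality
    ∀ q : ℝ × (Fin n → ℝ), 0 ≤ q.1 →
      0 ≤ Dt (fun r => ρ r * F (S r)) q
        + ∑ i, Dx i (fun r => u r i * (ρ r * F (S r))
            - dcoef (ρ r, eI r) * ρ r * Dx i (fun r' => F (S r')) r
            - acoef (ρ r, eI r) * F (S r) * Dx i ρ r) q := by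
  intro q hq
  obtain rfl := funext hS
  obtain rfl := funext hseF
  obtain rfl := funext hsρF
  obtain rfl : pF = fun r => press s (ρ r, eI r) := funext hpF
  have hstate : ∀ r, (ρ r, eI r) ∈ dom := fun r => ⟨hρpos r, heIpos r⟩
  have hρ0 : ∀ r, ρ r ≠ 0 := fun r => (hρpos r).ne'
  have hρd := hρ.differentiable two_ne_zero
  obtain ⟨hud, heId⟩ := differentiable_velocity_internalEnergy hρd
    (hm.differentiable two_ne_zero) (hE.differentiable two_ne_zero) hρ0 hu heI
  have hfd := hfvec.differentiable two_ne_zero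
  have hld := hlvec.differentiable two_ne_zero
  have hF'd := hF.differentiable_deriv_two
  obtain ⟨hmass, hent⟩ := mass_and_entropy_transport hs hsepos hstate hρd hud heId hfd hld
    (hG.differentiable two_ne_zero) hρ0 (fun r i => by rw [hu, div_mul_cancel₀ _ (hρ0 r)])
    heI hg hh (mass q hq) (momentum q hq) (energy q hq)
  refine le_of_le_of_eq (add_nonneg ?_ ?_) (generalized_entropy_balance
    (β := fun r => sE s (ρ r, eI r)) (η := fun r => enthalpy s (ρ r, eI r)) hρd hud hfd hld
    (differentiable_comp_state (hs.differentiableOn two_ne_zero) hρd heId hstate)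
    (differentiable_comp_state (differentiableOn_sE hs) hρd heId hstate)
    (differentiable_comp_state (differentiableOn_enthalpy hs hsepos) hρd heId hstate)
    (hF.differentiable two_ne_zero) hF'd (fun r => (hsepos _ (hstate r)).ne') hfdef hldef
    hmass hent).symm
  · exact mul_nonneg (mul_nonneg (hF' _ (hstate q)).le (hsepos _ (hstate q)).le) (hGpos q hq)
  · exact entropy_dissipation_nonneg hs hconv (hstate q) (hsepos _ (hstate q)) (hF'd _)
      (hF' _ (hstate q)) (hF'' _ (hstate q)) (hρd q) (heId q) (hdc _)
      (fun i => by rw [hfdef, had]) (fun i => by rw [hldef, enthalpy]; ring)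

/-- **Entropy inequality for `a = d` (sufficiency):** if the viscous coefficients satisfy
`a(ρ,e) = d(ρ,e)` for all states, then every generalized entropy `ρ f(s)` (with `f' > 0`
and `f' c_p⁻¹ - f'' > 0` at all states) satisfies the pointwise entropy inequality
`∂_t(ρ f(s)) + div(u ρ f(s) - d ρ ∇f(s) - a f(s) ∇ρ) ≥ 0`. -/
theorem entropy_inequality_of_a_eq_d
    (n : ℕ) (hn : 0 < n)
    (s : ℝ × ℝ → ℝ) (hs : ContDiffOn ℝ 2 s dom)
    (hsepos : ∀ x ∈ dom, 0 < sE s x) (hconv : Convexity s)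
    -- the fields of the solution
    (ρ E : ℝ × (Fin n → ℝ) → ℝ)
    (m fvec lvec : ℝ × (Fin n → ℝ) → Fin n → ℝ)
    (G : ℝ × (Fin n → ℝ) → Fin n → Fin n → ℝ)
    (hρ : ContDiff ℝ 2 ρ) (hE : ContDiff ℝ 2 E) (hm : ContDiff ℝ 2 m)
    (hfvec : ContDiff ℝ 2 fvec) (hlvec : ContDiff ℝ 2 lvec) (hG : ContDiff ℝ 2 G)
    (hρpos : ∀ q, 0 < ρ q)
    -- derived fields: velocity, internal energy, entropy, pressure
    (u : ℝ × (Fin n → ℝ) → Fin n → ℝ) (hu : ∀ q i, u q i = m q i / ρ q)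
    (eI : ℝ × (Fin n → ℝ) → ℝ)
    (heI : ∀ q, eI q = E q / ρ q - (1 / 2) * ∑ i, (u q i) ^ 2)
    (heIpos : ∀ q, 0 < eI q)
    (S seF sρF pF : ℝ × (Fin n → ℝ) → ℝ)
    (hS : ∀ q, S q = s (ρ q, eI q))
    (hseF : ∀ q, seF q = sE s (ρ q, eI q))
    (hsρF : ∀ q, sρF q = sRho s (ρ q, eI q))
    (hpF : ∀ q, pF q = -(ρ q) ^ 2 * sρF q / seF q)
    -- the viscous fluxes `𝕘 = 𝔾 + f⊗u`, `h = l - ½|u|² f`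
    (g : ℝ × (Fin n → ℝ) → Fin n → Fin n → ℝ)
    (hg : ∀ q i j, g q i j = G q i j + fvec q i * u q j)
    (h : ℝ × (Fin n → ℝ) → Fin n → ℝ)
    (hh : ∀ q i, h q i = lvec q i - (1 / 2) * (∑ k, (u q k) ^ 2) * fvec q i)
    -- structural assumptions
    (hGpos : ∀ q : ℝ × (Fin n → ℝ), 0 ≤ q.1 →
      0 ≤ ∑ i, ∑ j, G q i j * Dx i (fun r => u r j) q)
    (acoef dcoef : ℝ × ℝ → ℝ)
    (ha : ∀ y : ℝ × ℝ, 0 ≤ acoef y) (hdc : ∀ y : ℝ × ℝ, 0 ≤ dcoef y)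
    (hfdef : ∀ q i, fvec q i = acoef (ρ q, eI q) * Dx i ρ q)
    (hldef : ∀ q i, lvec q i = (seF q)⁻¹ * (eI q * seF q - ρ q * sρF q) * fvec q i
      + dcoef (ρ q, eI q) * ρ q * (seF q)⁻¹ * Dx i S q)
    -- the key assumption `a = d`
    (had : ∀ y : ℝ × ℝ, acoef y = dcoef y)
    -- the regularized Euler system
    (mass : ∀ q : ℝ × (Fin n → ℝ), 0 ≤ q.1 →
      Dt ρ q + (∑ i, Dx i (fun r => m r i) q) - (∑ i, Dx i (fun r => fvec r i) q) = 0)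
    (momentum : ∀ q : ℝ × (Fin n → ℝ), 0 ≤ q.1 → ∀ j,
      Dt (fun r => m r j) q + (∑ i, Dx i (fun r => u r i * m r j) q) + Dx j pF q
        - (∑ i, Dx i (fun r => g r i j) q) = 0)
    (energy : ∀ q : ℝ × (Fin n → ℝ), 0 ≤ q.1 →
      Dt E q + (∑ i, Dx i (fun r => u r i * (E r + pF r)) q)
        - (∑ i, Dx i (fun r => h r i + ∑ j, g r i j * u r j) q) = 0)
    -- a generalized entropy `ρ f(s)`
    (F : ℝ → ℝ) (hF : ContDiff ℝ 2 F)
    (hF' : ∀ z ∈ dom, 0 < deriv F (s z))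
    (hF'' : ∀ z ∈ dom, 0 < deriv F (s z) * (cP s z)⁻¹ - deriv (deriv F) (s z)) :
    -- the generalized entropy inequality
    ∀ q : ℝ × (Fin n → ℝ), 0 ≤ q.1 →
      0 ≤ Dt (fun r => ρ r * F (S r)) q
        + ∑ i, Dx i (fun r => u r i * (ρ r * F (S r))
            - dcoef (ρ r, eI r) * ρ r * Dx i (fun r' => F (S r')) r
            - acoef (ρ r, eI r) * F (S r) * Dx i ρ r) q :=
  entropy_inequality_of_a_eq_d_general n s hs hsepos hconv ρ E m fvec lvec G hρ hE hm hfvec hlvec hG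
    hρpos u hu eI heI heIpos S seF sρF pF hS hseF hsρF hpF g hg h hh hGpos acoef dcoef hdc hfdef
    hldef had mass momentum energy F hF hF' hF''
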